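/- If the Gentzen sequent Γ ⊢ Δ is provable in GL_seq, then the formula ⋀Γ → ⋁Δ is valid on all transitive converse-wellfounded models (soundness of GL_seq). -/
import Mathlib


/-- Modal formulas built from propositional atoms with ¬, ∨, □. -/
inductive Fml : Type
  | atom : ℕ → Fml
  | neg : Fml → Fml
  | or : Fml → Fml → Fml
  | box : Fml → Fml
  deriving DecidableEq

/-- Implication φ → ψ abbreviates ¬φ ∨ ψ. -/
def Fml.imp (φ ψ : Fml) : Fml := .or (.neg φ) ψ

/-- Conjunction φ ∧ ψ abbreviates ¬(¬φ ∨ ¬ψ). -/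
def Fml.and (φ ψ : Fml) : Fml := .neg (.or (.neg φ) (.neg ψ))

/-- Kripke satisfaction for modal formulas. -/
def Sat {W : Type} (R : W → W → Prop) (V : ℕ → W → Prop) : W → Fml → Prop
  | w, .atom n => V n w
  | w, .neg φ => ¬ Sat R V w φ
  | w, .or φ ψ => Sat R V w φ ∨ Sat R V w ψ
  | w, .box φ => ∀ u, R w u → Sat R V u φ

/-- Validity on all models (W,R,V) with W nonempty, R transitive and
conversely well-founded (no infinite ascending R-chains). -/
def Valid (φ : Fml) : Prop :=
  ∀ (W : Type), Nonempty W → ∀ (R : W → W → Prop) (V : ℕ → W → Prop),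
    Transitive R → WellFounded (fun a b => R b a) → ∀ w : W, Sat R V w φ

def verum : Fml := .or (.atom 0) (.neg (.atom 0))

def falsum : Fml := .neg verum

/-- Conjunction of a multiset of formulas. -/
noncomputable def mconj (Γ : Multiset Fml) : Fml := Γ.toList.foldr Fml.and verum

/-- Disjunction of a multiset of formulas. -/
noncomputable def mdisj (Δ : Multiset Fml) : Fml := Δ.toList.foldr Fml.or falsum

/-- The Gentzen sequent calculus GL_seq for Gödel-Löb logic. -/
inductive GLseq : Multiset Fml → Multiset Fml → Prop
  | id (Γ Δ : Multiset Fml) (φ : Fml) : GLseq (φ ::ₘ Γ) (φ ::ₘ Δ)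
  | negL {Γ Δ : Multiset Fml} {φ : Fml} :
      GLseq Γ (φ ::ₘ Δ) → GLseq (Fml.neg φ ::ₘ Γ) Δ
  | negR {Γ Δ : Multiset Fml} {φ : Fml} :
      GLseq (φ ::ₘ Γ) Δ → GLseq Γ (Fml.neg φ ::ₘ Δ)
  | orL {Γ Δ : Multiset Fml} {φ ψ : Fml} :
      GLseq (φ ::ₘ Γ) Δ → GLseq (ψ ::ₘ Γ) Δ → GLseq (Fml.or φ ψ ::ₘ Γ) Δ
  | orR {Γ Δ : Multiset Fml} {φ ψ : Fml} :
      GLseq Γ (φ ::ₘ ψ ::ₘ Δ) → GLseq Γ (Fml.or φ ψ ::ₘ Δ)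
  | boxGL {Γ Ξ Δ : Multiset Fml} {φ : Fml} :
      GLseq (Γ.map Fml.box + Γ + {Fml.box φ}) {φ} →
      GLseq (Ξ + Γ.map Fml.box) (Fml.box φ ::ₘ Δ)

lemma sat_and {W : Type} {R : W → W → Prop} {V : ℕ → W → Prop} {w : W} {φ ψ : Fml} :
    Sat R V w (Fml.and φ ψ) ↔ Sat R V w φ ∧ Sat R V w ψ := by
  simp only [Fml.and, Sat]; tauto

lemma sat_verum {W : Type} {R : W → W → Prop} {V : ℕ → W → Prop} {w : W} :
    Sat R V w verum := by
  simp only [verum, Sat]; tauto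

lemma sat_foldr_and {W : Type} {R : W → W → Prop} {V : ℕ → W → Prop} {w : W} (l : List Fml) :
    Sat R V w (l.foldr Fml.and verum) ↔ ∀ φ ∈ l, Sat R V w φ := by
  induction l with
  | nil => simpa using sat_verum
  | cons a l ih => simp [sat_and, ih]

lemma sat_mconj {W : Type} {R : W → W → Prop} {V : ℕ → W → Prop} {w : W} (Γ : Multiset Fml) :
    Sat R V w (mconj Γ) ↔ ∀ φ ∈ Γ, Sat R V w φ := by
  rw [mconj, sat_foldr_and]; simp

lemma sat_foldr_or {W : Type} {R : W → W → Prop} {V : ℕ → W → Prop} {w : W} (l : List Fml) :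
    Sat R V w (l.foldr Fml.or falsum) ↔ ∃ φ ∈ l, Sat R V w φ := by
  induction l with
  | nil => simp [falsum, Sat, sat_verum]
  | cons a l ih => simp [Sat, ih]

lemma sat_mdisj {W : Type} {R : W → W → Prop} {V : ℕ → W → Prop} {w : W} (Δ : Multiset Fml) :
    Sat R V w (mdisj Δ) ↔ ∃ φ ∈ Δ, Sat R V w φ := by
  rw [mdisj, sat_foldr_or]; simp

lemma glseq_sound_aux {Γ Δ : Multiset Fml} (hp : GLseq Γ Δ) :
    ∀ (W : Type) (R : W → W → Prop) (V : ℕ → W → Prop),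
      Transitive R → WellFounded (fun a b => R b a) →
      ∀ w : W, (∀ φ ∈ Γ, Sat R V w φ) → ∃ φ ∈ Δ, Sat R V w φ := by
  induction hp with
  | id Γ Δ φ =>
    intro W R V _ _ w h
    exact ⟨φ, Multiset.mem_cons_self _ _, h φ (Multiset.mem_cons_self _ _)⟩
  | @negL Γ Δ φ h ih =>
    intro W R V ht hwf w hΓ
    have hnφ := hΓ _ (Multiset.mem_cons_self _ _)
    obtain ⟨ψ, hmem, hsat⟩ := ih W R V ht hwf w
      (fun χ hχ => hΓ χ (Multiset.mem_cons_of_mem hχ))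
    rcases Multiset.mem_cons.mp hmem with rfl | hmem
    · exact absurd hsat hnφ
    · exact ⟨ψ, hmem, hsat⟩
  | @negR Γ Δ φ h ih =>
    intro W R V ht hwf w hΓ
    by_cases hφ : Sat R V w φ
    · obtain ⟨ψ, hmem, hsat⟩ := ih W R V ht hwf w (by
        intro χ hχ
        rcases Multiset.mem_cons.mp hχ with rfl | hχ
        · exact hφ
        · exact hΓ χ hχ)
      exact ⟨ψ, Multiset.mem_cons_of_mem hmem, hsat⟩
    · exact ⟨Fml.neg φ, Multiset.mem_cons_self _ _, hφ⟩
  | @orL Γ Δ φ ψ h1 h2 ih1 ih2 =>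
    intro W R V ht hwf w hΓ
    have hor := hΓ _ (Multiset.mem_cons_self _ _)
    have hrest : ∀ χ ∈ Γ, Sat R V w χ := fun χ hχ => hΓ χ (Multiset.mem_cons_of_mem hχ)
    rcases hor with hφ | hψ
    · exact ih1 W R V ht hwf w (by
        intro χ hχ
        rcases Multiset.mem_cons.mp hχ with rfl | hχ
        · exact hφ
        · exact hrest χ hχ)
    · exact ih2 W R V ht hwf w (by
        intro χ hχ
        rcases Multiset.mem_cons.mp hχ with rfl | hχ
        · exact hψ
        · exact hrest χ hχ)
  | @orR Γ Δ φ ψ h ih =>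
    intro W R V ht hwf w hΓ
    obtain ⟨χ, hmem, hsat⟩ := ih W R V ht hwf w hΓ
    rcases Multiset.mem_cons.mp hmem with rfl | hmem
    · exact ⟨_, Multiset.mem_cons_self _ _, Or.inl hsat⟩
    rcases Multiset.mem_cons.mp hmem with rfl | hmem
    · exact ⟨_, Multiset.mem_cons_self _ _, Or.inr hsat⟩
    · exact ⟨χ, Multiset.mem_cons_of_mem hmem, hsat⟩
  | @boxGL Γ Ξ Δ φ h ih =>
    intro W R V ht hwf w hΓ
    refine ⟨Fml.box φ, Multiset.mem_cons_self _ _, ?_⟩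
    -- every γ ∈ Γ has □γ satisfied at w
    have hbox : ∀ γ ∈ Γ, Sat R V w (Fml.box γ) := by
      intro γ hγ
      exact hΓ (Fml.box γ) (Multiset.mem_add.mpr (Or.inr (Multiset.mem_map_of_mem _ hγ)))
    -- prove ∀ u, R w u → Sat R V u φ by converse-wf induction
    intro u hwu
    induction u using hwf.induction with
    | _ u IH =>
      -- IH : ∀ v, R u v → R w v → Sat R V v φ
      have key : ∀ χ ∈ Γ.map Fml.box + Γ + {Fml.box φ}, Sat R V u χ := by
        intro χ hχ
        rcases Multiset.mem_add.mp hχ with hχ | hχ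
        · rcases Multiset.mem_add.mp hχ with hχ | hχ
          · obtain ⟨γ, hγ, rfl⟩ := Multiset.mem_map.mp hχ
            intro v huv
            exact hbox γ hγ v (ht hwu huv)
          · exact hbox χ hχ u hwu
        · rw [Multiset.mem_singleton.mp hχ]
          intro v huv
          exact IH v huv (ht hwu huv)
      obtain ⟨ψ, hmem, hsat⟩ := ih W R V ht hwf u key
      rwa [Multiset.mem_singleton.mp hmem] at hsat

/-- Soundness of GL_seq: if Γ ⊢ Δ is provable in GL_seq, then ⋀Γ → ⋁Δ is
valid on all transitive converse-wellfounded models. -/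
theorem glseq_sound (Γ Δ : Multiset Fml) (hp : GLseq Γ Δ) :
    Valid (Fml.imp (mconj Γ) (mdisj Δ)) := by
  intro W _ R V ht hwf w
  show ¬ Sat R V w (mconj Γ) ∨ Sat R V w (mdisj Δ)
  by_cases h : Sat R V w (mconj Γ)
  · right
    rw [sat_mdisj]
    exact glseq_sound_aux hp W R V ht hwf w ((sat_mconj Γ).mp h)
  · left; exact h
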